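/- Let a and b be Wiener-class sequences, and let E_a and E_b be bounded semi-infinite real matrices with the decay property. Set A := T(a) + E_a and B := T(b) + E_b. Then the entrywise matrix product AB can be written as AB = T(a⋆b) + E_c where E_c is a bounded semi-infinite matrix with the decay property; that is, the class QT_∞^d of matrices of the form T(a)+E with a in the Wiener class and E with the decay property is closed under matrix multiplication. -/
import Mathlib


open Filter Topology

/-- Every row of `A` is absolutely summable. -/
def RowsSummable (A : ℕ → ℕ → ℝ) : Prop := ∀ i, Summable fun j => |A i j|

/-- The infinity norm of a semi-infinite matrix: the supremum of the row sums. -/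
noncomputable def normInf (A : ℕ → ℕ → ℝ) : ℝ := ⨆ i, ∑' j, |A i j|

/-- `A` is bounded: all row sums are finite and their supremum is finite. -/
def MatBounded (A : ℕ → ℕ → ℝ) : Prop :=
  RowsSummable A ∧ BddAbove (Set.range fun i => ∑' j, |A i j|)

/-- `A` has the decay property: all row sums are finite and tend to zero. -/
def HasDecay (A : ℕ → ℕ → ℝ) : Prop :=
  RowsSummable A ∧ Tendsto (fun i => ∑' j, |A i j|) atTop (𝓝 0)

/-- The semi-infinite Toeplitz matrix associated with a two-sided sequence:
`T(a)_{ij} = a_{j−i}`. -/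
noncomputable def Toep (a : ℤ → ℝ) : ℕ → ℕ → ℝ := fun i j => a ((j : ℤ) - (i : ℤ))

/-- Convolution of two-sided sequences. -/
noncomputable def zconv (a b : ℤ → ℝ) : ℤ → ℝ := fun n => ∑' k : ℤ, a k * b (n - k)

open Finset

/-- Fubini-lite: row-sum bound for a nonnegative double array. -/
lemma aux_rowsum (g : ℕ → ℕ → ℝ) (c : ℕ → ℝ)
    (hg0 : ∀ k j, 0 ≤ g k j)
    (hrow : ∀ j, Summable fun k => g k j)
    (hc : Summable c) (hgc : ∀ k, ∀ s : Finset ℕ, ∑ j ∈ s, g k j ≤ c k) :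
    Summable (fun j => ∑' k, g k j) ∧ ∑' j, ∑' k, g k j ≤ ∑' k, c k := by
  have key : ∀ n : ℕ, ∑ j ∈ range n, ∑' k, g k j ≤ ∑' k, c k := by
    intro n
    have h1 : ∑ j ∈ range n, ∑' k, g k j = ∑' k, ∑ j ∈ range n, g k j :=
      (Summable.tsum_finsetSum (fun j _ => hrow j)).symm
    rw [h1]
    refine Summable.tsum_le_tsum (fun k => hgc k (range n)) ?_ hc
    exact summable_sum (fun j _ => hrow j)
  exact ⟨summable_of_sum_range_le (fun j => tsum_nonneg fun k => hg0 k j) key,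
    Real.tsum_le_of_sum_range_le (fun j => tsum_nonneg fun k => hg0 k j) key⟩

lemma aux_inj_tsum_le {a : ℤ → ℝ} (ha : Summable fun n => |a n|) (e : ℕ → ℤ)
    (he : Function.Injective e) : ∑' k, |a (e k)| ≤ ∑' n, |a n| :=
  Summable.tsum_le_tsum_of_inj e he (fun _ _ => abs_nonneg _) (fun _ => le_rfl)
    (ha.comp_injective he) ha

lemma aux_inj_summable {a : ℤ → ℝ} (ha : Summable fun n => |a n|) (e : ℕ → ℤ)
    (he : Function.Injective e) : Summable fun k => |a (e k)| :=
  ha.comp_injective he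

lemma aux_quad (x y z w : ℝ) : |x + y + z - w| ≤ |x| + |y| + |z| + |w| := by
  have h1 := abs_add_le (x + y + z) (-w)
  have h2 := abs_add_le (x + y) z
  have h3 := abs_add_le x y
  rw [abs_neg] at h1
  rw [sub_eq_add_neg]
  linarith

lemma aux_beta (a : ℤ → ℝ) (ha : Summable fun n => |a n|) (w : ℕ → ℝ)
    (hw0 : ∀ k, 0 ≤ w k) (C : ℝ) (hwC : ∀ k, w k ≤ C)
    (hw : Tendsto w atTop (𝓝 0)) :
    Tendsto (fun i : ℕ => ∑' k : ℕ, |a ((k : ℤ) - (i : ℤ))| * w k) atTop (𝓝 0) := by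
  have hC0 : (0:ℝ) ≤ C := le_trans (hw0 0) (hwC 0)
  set S := ∑' n : ℤ, |a n| with hS
  have hS0 : 0 ≤ S := tsum_nonneg fun _ => abs_nonneg _
  have hinj : ∀ i : ℕ, Function.Injective (fun k : ℕ => (k : ℤ) - (i : ℤ)) := by
    intro i x y h; simpa using h
  have hsum : ∀ i : ℕ, Summable fun k : ℕ => |a ((k : ℤ) - (i : ℤ))| :=
    fun i => aux_inj_summable ha _ (hinj i)
  have hts : ∀ i : ℕ, Summable fun k : ℕ => |a ((k : ℤ) - (i : ℤ))| * w k := by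
    intro i
    refine Summable.of_nonneg_of_le (fun k => mul_nonneg (abs_nonneg _) (hw0 k))
      (fun k => mul_le_mul_of_nonneg_left (hwC k) (abs_nonneg _)) ((hsum i).mul_right C)
  rw [Metric.tendsto_atTop]
  intro ε hε
  set δ1 := ε / (2 * (S + 1)) with hδ1def
  have hδ1 : 0 < δ1 := by positivity
  obtain ⟨N, hN⟩ := (Metric.tendsto_atTop.mp hw) δ1 hδ1
  have hNw : ∀ k, N ≤ k → w k ≤ δ1 := by
    intro k hk
    have := hN k hk
    rw [Real.dist_eq, sub_zero] at this
    exact le_of_lt (lt_of_abs_lt this)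
  set δ2 := ε / (2 * ((N : ℝ) * C + 1)) with hδ2def
  have hNC0 : (0:ℝ) ≤ (N : ℝ) * C := by positivity
  have hδ2 : 0 < δ2 := by positivity
  have hfin : {n : ℤ | ¬ |a n| < δ2}.Finite :=
    Filter.eventually_cofinite.mp (ha.tendsto_cofinite_zero.eventually (gt_mem_nhds hδ2))
  obtain ⟨m, hm⟩ := hfin.bddBelow
  have hsmall : ∀ n : ℤ, n < m → |a n| < δ2 := by
    intro n hn
    by_contra h
    exact absurd (hm (by simpa using h)) (not_le.mpr hn)
  refine ⟨N + (N - m).toNat, fun i hi => ?_⟩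
  have hge : ((N : ℤ) - m) ≤ (i : ℤ) := by
    calc (N:ℤ) - m ≤ ((N - m).toNat : ℤ) := Int.self_le_toNat _
    _ ≤ (i : ℤ) := by exact_mod_cast le_trans (Nat.le_add_left _ _) hi
  set t := fun k : ℕ => |a ((k : ℤ) - (i : ℤ))| * w k with htdef
  have hsplit : ∑' k, t k = ∑ k ∈ range N, t k + ∑' k, t (k + N) :=
    ((Summable.sum_add_tsum_nat_add N (hts i)).symm)
  have hfirst : ∑ k ∈ range N, t k ≤ (N : ℝ) * (δ2 * C) := by
    have hterm : ∀ k ∈ range N, t k ≤ δ2 * C := by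
      intro k hk
      have hkN : k < N := mem_range.mp hk
      have hlt : ((k : ℤ) - (i : ℤ)) < m := by
        have : (k : ℤ) < N := by exact_mod_cast hkN
        omega
      exact mul_le_mul (le_of_lt (hsmall _ hlt)) (hwC k) (hw0 k) (le_of_lt hδ2)
    calc ∑ k ∈ range N, t k ≤ ∑ _k ∈ range N, (δ2 * C) := Finset.sum_le_sum hterm
    _ = (N : ℝ) * (δ2 * C) := by simp [mul_comm]
  have hsecond : ∑' k, t (k + N) ≤ δ1 * S := by
    have h1 : ∀ k : ℕ, t (k + N) ≤ |a (((k + N : ℕ) : ℤ) - (i : ℤ))| * δ1 := by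
      intro k
      exact mul_le_mul_of_nonneg_left (hNw (k + N) (Nat.le_add_left _ _)) (abs_nonneg _)
    have hsum2 : Summable fun k : ℕ => |a (((k + N : ℕ) : ℤ) - (i : ℤ))| := by
      refine aux_inj_summable ha _ ?_
      intro x y h; simp at h; omega
    calc ∑' k, t (k + N) ≤ ∑' k : ℕ, |a (((k + N : ℕ) : ℤ) - (i : ℤ))| * δ1 := by
          refine Summable.tsum_le_tsum h1 ((hts i).comp_injective ?_) (hsum2.mul_right δ1)
          intro x y h; simpa using h
    _ = (∑' k : ℕ, |a (((k + N : ℕ) : ℤ) - (i : ℤ))|) * δ1 := tsum_mul_right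
    _ ≤ S * δ1 := by
          refine mul_le_mul_of_nonneg_right ?_ (le_of_lt hδ1)
          refine aux_inj_tsum_le ha _ ?_
          intro x y h; simp at h; omega
    _ = δ1 * S := mul_comm _ _
  have htot : ∑' k, t k ≤ (N:ℝ) * (δ2 * C) + δ1 * S := by
    rw [hsplit]; exact add_le_add hfirst hsecond
  have harith : (N:ℝ) * (δ2 * C) + δ1 * S < ε := by
    have h2 : δ2 * (2 * ((N : ℝ) * C + 1)) = ε := by
      rw [hδ2def]; field_simp
    have h1 : δ1 * (2 * (S + 1)) = ε := by
      rw [hδ1def]; field_simp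
    nlinarith [hδ1, hδ2, hS0, hNC0]
  rw [Real.dist_eq, sub_zero,
    abs_of_nonneg (tsum_nonneg fun k => mul_nonneg (abs_nonneg _) (hw0 k))]
  exact lt_of_le_of_lt htot harith

/- STATEMENT 8: the class QT_∞^d is closed under multiplication: for A = T(a)+E_a
and B = T(b)+E_b with a,b Wiener-class and E_a, E_b bounded with the decay
property, one has AB = T(a⋆b) + E_c with E_c bounded and with the decay
property. -/

theorem stmt8 (a b : ℤ → ℝ) (ha : Summable fun n => |a n|)
    (hb : Summable fun n => |b n|)
    (Ea Eb : ℕ → ℕ → ℝ)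
    (hEa : MatBounded Ea) (hEad : HasDecay Ea)
    (hEb : MatBounded Eb) (hEbd : HasDecay Eb) :
    ∃ Ec : ℕ → ℕ → ℝ, MatBounded Ec ∧ HasDecay Ec ∧
      ∀ i j, (∑' k, (Toep a i k + Ea i k) * (Toep b k j + Eb k j)) =
        Toep (zconv a b) i j + Ec i j := by
  classical
  obtain ⟨hEaS, hEaB⟩ := hEa
  obtain ⟨hEbS, hEbB⟩ := hEb
  obtain ⟨Ca, hCa'⟩ := hEaB
  obtain ⟨Cb, hCb'⟩ := hEbB
  set wEa : ℕ → ℝ := fun i => ∑' k, |Ea i k| with hwEadef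
  set wEb : ℕ → ℝ := fun k => ∑' j, |Eb k j| with hwEbdef
  have hCa : ∀ i, wEa i ≤ Ca := fun i => hCa' ⟨i, rfl⟩
  have hCb : ∀ k, wEb k ≤ Cb := fun k => hCb' ⟨k, rfl⟩
  have hwEa0 : ∀ i, 0 ≤ wEa i := fun i => tsum_nonneg fun _ => abs_nonneg _
  have hwEb0 : ∀ k, 0 ≤ wEb k := fun k => tsum_nonneg fun _ => abs_nonneg _
  have hCa0 : (0:ℝ) ≤ Ca := le_trans (hwEa0 0) (hCa 0)
  have hCb0 : (0:ℝ) ≤ Cb := le_trans (hwEb0 0) (hCb 0)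
  set Sa : ℝ := ∑' n : ℤ, |a n| with hSadef
  set Bb : ℝ := ∑' n : ℤ, |b n| with hBbdef
  have hSa0 : 0 ≤ Sa := tsum_nonneg fun _ => abs_nonneg _
  have hBb0 : 0 ≤ Bb := tsum_nonneg fun _ => abs_nonneg _
  have hbb : ∀ n : ℤ, |b n| ≤ Bb := fun n => Summable.le_tsum hb n fun _ _ => abs_nonneg _
  have hEbw : ∀ k j, |Eb k j| ≤ wEb k := fun k j => Summable.le_tsum (hEbS k) j fun _ _ => abs_nonneg _
  have hEbC : ∀ k j, |Eb k j| ≤ Cb := fun k j => (hEbw k j).trans (hCb k)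
  -- summability of shifted sequences
  have hA : ∀ i : ℕ, Summable fun k : ℕ => |a ((k:ℤ) - (i:ℤ))| :=
    fun i => aux_inj_summable ha _ (fun x y h => by simpa using h)
  have hAneg : ∀ i : ℕ, Summable fun k : ℕ => |a (-((k:ℤ)+1) - (i:ℤ))| :=
    fun i => aux_inj_summable ha _ (fun x y h => by simp at h; omega)
  have hB2 : ∀ kz : ℤ, Summable fun j : ℕ => |b ((j:ℤ) - kz)| :=
    fun kz => aux_inj_summable hb _ (fun x y h => by simp at h; omega)
  have hB2le : ∀ kz : ℤ, (∑' j : ℕ, |b ((j:ℤ) - kz)|) ≤ Bb :=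
    fun kz => aux_inj_tsum_le hb _ (fun x y h => by simp at h; omega)
  -- abs-summability of the four pieces in k, for fixed i j
  have habs1 : ∀ i j : ℕ, Summable fun k : ℕ => |a ((k:ℤ)-(i:ℤ)) * b ((j:ℤ)-(k:ℤ))| := by
    intro i j
    refine Summable.of_nonneg_of_le (fun k => abs_nonneg _) (fun k => ?_) ((hA i).mul_right Bb)
    rw [abs_mul]
    exact mul_le_mul_of_nonneg_left (hbb _) (abs_nonneg _)
  have habs2 : ∀ i j : ℕ, Summable fun k : ℕ => |a ((k:ℤ)-(i:ℤ)) * Eb k j| := by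
    intro i j
    refine Summable.of_nonneg_of_le (fun k => abs_nonneg _) (fun k => ?_) ((hA i).mul_right Cb)
    rw [abs_mul]
    exact mul_le_mul_of_nonneg_left (hEbC _ _) (abs_nonneg _)
  have habs3 : ∀ i j : ℕ, Summable fun k : ℕ => |Ea i k * b ((j:ℤ)-(k:ℤ))| := by
    intro i j
    refine Summable.of_nonneg_of_le (fun k => abs_nonneg _) (fun k => ?_) ((hEaS i).mul_right Bb)
    rw [abs_mul]
    exact mul_le_mul_of_nonneg_left (hbb _) (abs_nonneg _)
  have habs4 : ∀ i j : ℕ, Summable fun k : ℕ => |Ea i k * Eb k j| := by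
    intro i j
    refine Summable.of_nonneg_of_le (fun k => abs_nonneg _) (fun k => ?_) ((hEaS i).mul_right Cb)
    rw [abs_mul]
    exact mul_le_mul_of_nonneg_left (hEbC _ _) (abs_nonneg _)
  have habsν : ∀ i j : ℕ,
      Summable fun k : ℕ => |a (-((k:ℤ)+1) - (i:ℤ)) * b ((j:ℤ) - -((k:ℤ)+1))| := by
    intro i j
    refine Summable.of_nonneg_of_le (fun k => abs_nonneg _) (fun k => ?_) ((hAneg i).mul_right Bb)
    rw [abs_mul]
    exact mul_le_mul_of_nonneg_left (hbb _) (abs_nonneg _)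
  have hs1 : ∀ i j : ℕ, Summable fun k : ℕ => a ((k:ℤ)-(i:ℤ)) * b ((j:ℤ)-(k:ℤ)) :=
    fun i j => (habs1 i j).of_abs
  have hs2 : ∀ i j : ℕ, Summable fun k : ℕ => a ((k:ℤ)-(i:ℤ)) * Eb k j :=
    fun i j => (habs2 i j).of_abs
  have hs3 : ∀ i j : ℕ, Summable fun k : ℕ => Ea i k * b ((j:ℤ)-(k:ℤ)) :=
    fun i j => (habs3 i j).of_abs
  have hs4 : ∀ i j : ℕ, Summable fun k : ℕ => Ea i k * Eb k j :=
    fun i j => (habs4 i j).of_abs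
  have hsν : ∀ i j : ℕ, Summable fun k : ℕ => a (-((k:ℤ)+1) - (i:ℤ)) * b ((j:ℤ) - -((k:ℤ)+1)) :=
    fun i j => (habsν i j).of_abs
  -- the Toeplitz part identity
  have hzconv : ∀ i j : ℕ, Toep (zconv a b) i j =
      (∑' k : ℕ, a ((k:ℤ)-(i:ℤ)) * b ((j:ℤ)-(k:ℤ)))
        + ∑' k : ℕ, a (-((k:ℤ)+1) - (i:ℤ)) * b ((j:ℤ) - -((k:ℤ)+1)) := by
    intro i j
    have e2 : ∑' m : ℤ, a (m - (i:ℤ)) * b ((j:ℤ) - m)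
        = ∑' m : ℤ, a m * b (((j:ℤ) - (i:ℤ)) - m) := by
      calc ∑' m : ℤ, a (m - (i:ℤ)) * b ((j:ℤ) - m)
          = ∑' m : ℤ, a ((Equiv.subRight (i:ℤ)) m)
              * b (((j:ℤ)-(i:ℤ)) - (Equiv.subRight (i:ℤ)) m) := by
            refine tsum_congr fun m => ?_
            simp only [Equiv.subRight_apply]
            have harg : (j:ℤ) - (i:ℤ) - (m - (i:ℤ)) = (j:ℤ) - m := by ring
            rw [harg]
        _ = ∑' m : ℤ, a m * b (((j:ℤ)-(i:ℤ)) - m) :=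
            (Equiv.subRight (i:ℤ)).tsum_eq (fun m => a m * b (((j:ℤ)-(i:ℤ)) - m))
    have hsplit := tsum_of_nat_of_neg_add_one
      (f := fun m : ℤ => a (m - (i:ℤ)) * b ((j:ℤ) - m)) (hs1 i j) (hsν i j)
    calc Toep (zconv a b) i j = ∑' m : ℤ, a m * b (((j:ℤ)-(i:ℤ)) - m) := rfl
      _ = ∑' m : ℤ, a (m - (i:ℤ)) * b ((j:ℤ) - m) := e2.symm
      _ = _ := hsplit
  -- the product expansion
  have hexp : ∀ i j : ℕ, (∑' k, (Toep a i k + Ea i k) * (Toep b k j + Eb k j))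
      = (∑' k : ℕ, a ((k:ℤ)-(i:ℤ)) * b ((j:ℤ)-(k:ℤ)))
        + ((∑' k : ℕ, a ((k:ℤ)-(i:ℤ)) * Eb k j)
        + ((∑' k : ℕ, Ea i k * b ((j:ℤ)-(k:ℤ))) + (∑' k : ℕ, Ea i k * Eb k j))) := by
    intro i j
    have h0 : ∀ k : ℕ, (Toep a i k + Ea i k) * (Toep b k j + Eb k j)
        = a ((k:ℤ)-(i:ℤ)) * b ((j:ℤ)-(k:ℤ)) + (a ((k:ℤ)-(i:ℤ)) * Eb k j
          + (Ea i k * b ((j:ℤ)-(k:ℤ)) + Ea i k * Eb k j)) := by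
      intro k; simp only [Toep]; ring
    rw [tsum_congr h0, Summable.tsum_add (hs1 i j) ((hs2 i j).add ((hs3 i j).add (hs4 i j))),
        Summable.tsum_add (hs2 i j) ((hs3 i j).add (hs4 i j)), Summable.tsum_add (hs3 i j) (hs4 i j)]
  set Ec : ℕ → ℕ → ℝ := fun i j =>
    (∑' k, (Toep a i k + Ea i k) * (Toep b k j + Eb k j)) - Toep (zconv a b) i j with hEcdef
  have hEcval : ∀ i j : ℕ, Ec i j =
      (∑' k : ℕ, a ((k:ℤ)-(i:ℤ)) * Eb k j) + (∑' k : ℕ, Ea i k * b ((j:ℤ)-(k:ℤ)))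
        + (∑' k : ℕ, Ea i k * Eb k j)
        - ∑' k : ℕ, a (-((k:ℤ)+1) - (i:ℤ)) * b ((j:ℤ) - -((k:ℤ)+1)) := by
    intro i j
    simp only [hEcdef]
    rw [hexp i j, hzconv i j]
    ring
  -- pointwise bound by the four majorant rows
  have hEcbound : ∀ i j : ℕ, |Ec i j| ≤
      (∑' k : ℕ, |a ((k:ℤ)-(i:ℤ))| * |Eb k j|)
      + (∑' k : ℕ, |Ea i k| * |b ((j:ℤ)-(k:ℤ))|)
      + (∑' k : ℕ, |Ea i k| * |Eb k j|)
      + (∑' k : ℕ, |a (-((k:ℤ)+1) - (i:ℤ))| * |b ((j:ℤ) - -((k:ℤ)+1))|) := by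
    intro i j
    rw [hEcval i j]
    have e2 : |∑' k : ℕ, a ((k:ℤ)-(i:ℤ)) * Eb k j|
        ≤ ∑' k : ℕ, |a ((k:ℤ)-(i:ℤ))| * |Eb k j| := by
      have hsn : Summable fun k : ℕ => ‖a ((k:ℤ)-(i:ℤ)) * Eb k j‖ := by
        simpa only [Real.norm_eq_abs] using habs2 i j
      have h := norm_tsum_le_tsum_norm hsn
      simp only [Real.norm_eq_abs] at h
      exact h.trans (le_of_eq (tsum_congr fun k => abs_mul _ _))
    have e3 : |∑' k : ℕ, Ea i k * b ((j:ℤ)-(k:ℤ))|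
        ≤ ∑' k : ℕ, |Ea i k| * |b ((j:ℤ)-(k:ℤ))| := by
      have hsn : Summable fun k : ℕ => ‖Ea i k * b ((j:ℤ)-(k:ℤ))‖ := by
        simpa only [Real.norm_eq_abs] using habs3 i j
      have h := norm_tsum_le_tsum_norm hsn
      simp only [Real.norm_eq_abs] at h
      exact h.trans (le_of_eq (tsum_congr fun k => abs_mul _ _))
    have e4 : |∑' k : ℕ, Ea i k * Eb k j| ≤ ∑' k : ℕ, |Ea i k| * |Eb k j| := by
      have hsn : Summable fun k : ℕ => ‖Ea i k * Eb k j‖ := by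
        simpa only [Real.norm_eq_abs] using habs4 i j
      have h := norm_tsum_le_tsum_norm hsn
      simp only [Real.norm_eq_abs] at h
      exact h.trans (le_of_eq (tsum_congr fun k => abs_mul _ _))
    have eν : |∑' k : ℕ, a (-((k:ℤ)+1) - (i:ℤ)) * b ((j:ℤ) - -((k:ℤ)+1))|
        ≤ ∑' k : ℕ, |a (-((k:ℤ)+1) - (i:ℤ))| * |b ((j:ℤ) - -((k:ℤ)+1))| := by
      have hsn : Summable fun k : ℕ => ‖a (-((k:ℤ)+1) - (i:ℤ)) * b ((j:ℤ) - -((k:ℤ)+1))‖ := by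
        simpa only [Real.norm_eq_abs] using habsν i j
      have h := norm_tsum_le_tsum_norm hsn
      simp only [Real.norm_eq_abs] at h
      exact h.trans (le_of_eq (tsum_congr fun k => abs_mul _ _))
    exact (aux_quad _ _ _ _).trans (add_le_add (add_le_add (add_le_add e2 e3) e4) eν)
  -- row-sum bounds via aux_rowsum
  have R2 : ∀ i : ℕ, Summable (fun j : ℕ => ∑' k : ℕ, |a ((k:ℤ)-(i:ℤ))| * |Eb k j|) ∧
      (∑' j : ℕ, ∑' k : ℕ, |a ((k:ℤ)-(i:ℤ))| * |Eb k j|)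
        ≤ ∑' k : ℕ, |a ((k:ℤ)-(i:ℤ))| * wEb k := by
    intro i
    refine aux_rowsum _ _ (fun k j => mul_nonneg (abs_nonneg _) (abs_nonneg _))
      (fun j => ?_) ?_ (fun k s => ?_)
    · refine Summable.of_nonneg_of_le (fun k => mul_nonneg (abs_nonneg _) (abs_nonneg _))
        (fun k => mul_le_mul_of_nonneg_left (hEbC k j) (abs_nonneg _)) ((hA i).mul_right Cb)
    · refine Summable.of_nonneg_of_le (fun k => mul_nonneg (abs_nonneg _) (hwEb0 k))
        (fun k => mul_le_mul_of_nonneg_left (hCb k) (abs_nonneg _)) ((hA i).mul_right Cb)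
    · rw [← Finset.mul_sum]
      exact mul_le_mul_of_nonneg_left
        (Summable.sum_le_tsum s (fun _ _ => abs_nonneg _) (hEbS k)) (abs_nonneg _)
  have R3 : ∀ i : ℕ, Summable (fun j : ℕ => ∑' k : ℕ, |Ea i k| * |b ((j:ℤ)-(k:ℤ))|) ∧
      (∑' j : ℕ, ∑' k : ℕ, |Ea i k| * |b ((j:ℤ)-(k:ℤ))|) ≤ ∑' k : ℕ, |Ea i k| * Bb := by
    intro i
    refine aux_rowsum _ _ (fun k j => mul_nonneg (abs_nonneg _) (abs_nonneg _))
      (fun j => ?_) ((hEaS i).mul_right Bb) (fun k s => ?_)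
    · refine Summable.of_nonneg_of_le (fun k => mul_nonneg (abs_nonneg _) (abs_nonneg _))
        (fun k => mul_le_mul_of_nonneg_left (hbb _) (abs_nonneg _)) ((hEaS i).mul_right Bb)
    · rw [← Finset.mul_sum]
      refine mul_le_mul_of_nonneg_left ?_ (abs_nonneg _)
      exact (Summable.sum_le_tsum s (fun _ _ => abs_nonneg _) (hB2 (k:ℤ))).trans (hB2le (k:ℤ))
  have R4 : ∀ i : ℕ, Summable (fun j : ℕ => ∑' k : ℕ, |Ea i k| * |Eb k j|) ∧
      (∑' j : ℕ, ∑' k : ℕ, |Ea i k| * |Eb k j|) ≤ ∑' k : ℕ, |Ea i k| * Cb := by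
    intro i
    refine aux_rowsum _ _ (fun k j => mul_nonneg (abs_nonneg _) (abs_nonneg _))
      (fun j => ?_) ((hEaS i).mul_right Cb) (fun k s => ?_)
    · refine Summable.of_nonneg_of_le (fun k => mul_nonneg (abs_nonneg _) (abs_nonneg _))
        (fun k => mul_le_mul_of_nonneg_left (hEbC k j) (abs_nonneg _)) ((hEaS i).mul_right Cb)
    · rw [← Finset.mul_sum]
      refine mul_le_mul_of_nonneg_left ?_ (abs_nonneg _)
      exact (Summable.sum_le_tsum s (fun _ _ => abs_nonneg _) (hEbS k)).trans (hCb k)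
  have R1 : ∀ i : ℕ,
      Summable (fun j : ℕ => ∑' k : ℕ, |a (-((k:ℤ)+1) - (i:ℤ))| * |b ((j:ℤ) - -((k:ℤ)+1))|) ∧
      (∑' j : ℕ, ∑' k : ℕ, |a (-((k:ℤ)+1) - (i:ℤ))| * |b ((j:ℤ) - -((k:ℤ)+1))|)
        ≤ ∑' k : ℕ, |a (-((k:ℤ)+1) - (i:ℤ))| * Bb := by
    intro i
    refine aux_rowsum _ _ (fun k j => mul_nonneg (abs_nonneg _) (abs_nonneg _))
      (fun j => ?_) ((hAneg i).mul_right Bb) (fun k s => ?_)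
    · refine Summable.of_nonneg_of_le (fun k => mul_nonneg (abs_nonneg _) (abs_nonneg _))
        (fun k => mul_le_mul_of_nonneg_left (hbb _) (abs_nonneg _)) ((hAneg i).mul_right Bb)
    · rw [← Finset.mul_sum]
      refine mul_le_mul_of_nonneg_left ?_ (abs_nonneg _)
      exact (Summable.sum_le_tsum s (fun _ _ => abs_nonneg _) (hB2 _)).trans (hB2le _)
  -- rows of Ec are summable
  have hEcrow : ∀ i : ℕ, Summable fun j : ℕ => |Ec i j| := by
    intro i
    exact Summable.of_nonneg_of_le (fun j => abs_nonneg _) (hEcbound i)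
      ((((R2 i).1.add (R3 i).1).add ((R4 i).1)).add ((R1 i).1))
  -- row-sum estimate
  have hEcsum : ∀ i : ℕ, (∑' j, |Ec i j|) ≤
      (∑' k : ℕ, |a ((k:ℤ)-(i:ℤ))| * wEb k) + wEa i * Bb + wEa i * Cb
        + (∑' k : ℕ, |a (-((k:ℤ)+1) - (i:ℤ))|) * Bb := by
    intro i
    have hsum4 := (((R2 i).1.add (R3 i).1).add ((R4 i).1)).add ((R1 i).1)
    calc ∑' j, |Ec i j|
        ≤ ∑' j : ℕ, ((∑' k : ℕ, |a ((k:ℤ)-(i:ℤ))| * |Eb k j|)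
            + (∑' k : ℕ, |Ea i k| * |b ((j:ℤ)-(k:ℤ))|)
            + (∑' k : ℕ, |Ea i k| * |Eb k j|)
            + (∑' k : ℕ, |a (-((k:ℤ)+1) - (i:ℤ))| * |b ((j:ℤ) - -((k:ℤ)+1))|)) :=
          Summable.tsum_le_tsum (hEcbound i) (hEcrow i) hsum4
      _ = (∑' j : ℕ, ∑' k : ℕ, |a ((k:ℤ)-(i:ℤ))| * |Eb k j|)
            + (∑' j : ℕ, ∑' k : ℕ, |Ea i k| * |b ((j:ℤ)-(k:ℤ))|)
            + (∑' j : ℕ, ∑' k : ℕ, |Ea i k| * |Eb k j|)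
            + (∑' j : ℕ, ∑' k : ℕ, |a (-((k:ℤ)+1) - (i:ℤ))| * |b ((j:ℤ) - -((k:ℤ)+1))|) := by
          rw [Summable.tsum_add (((R2 i).1.add (R3 i).1).add ((R4 i).1)) ((R1 i).1),
            Summable.tsum_add ((R2 i).1.add (R3 i).1) ((R4 i).1), Summable.tsum_add ((R2 i).1) ((R3 i).1)]
      _ ≤ (∑' k : ℕ, |a ((k:ℤ)-(i:ℤ))| * wEb k) + wEa i * Bb + wEa i * Cb
            + (∑' k : ℕ, |a (-((k:ℤ)+1) - (i:ℤ))|) * Bb := by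
          refine add_le_add (add_le_add (add_le_add (R2 i).2 ?_) ?_) ?_
          · exact le_trans (R3 i).2 (le_of_eq tsum_mul_right)
          · exact le_trans (R4 i).2 (le_of_eq tsum_mul_right)
          · exact le_trans (R1 i).2 (le_of_eq tsum_mul_right)
  -- uniform bound on the majorant
  have hβle : ∀ i : ℕ, (∑' k : ℕ, |a ((k:ℤ)-(i:ℤ))| * wEb k) ≤ Sa * Cb := by
    intro i
    have hc2 : Summable fun k : ℕ => |a ((k:ℤ)-(i:ℤ))| * wEb k := by
      refine Summable.of_nonneg_of_le (fun k => mul_nonneg (abs_nonneg _) (hwEb0 k))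
        (fun k => mul_le_mul_of_nonneg_left (hCb k) (abs_nonneg _)) ((hA i).mul_right Cb)
    calc ∑' k : ℕ, |a ((k:ℤ)-(i:ℤ))| * wEb k
        ≤ ∑' k : ℕ, |a ((k:ℤ)-(i:ℤ))| * Cb :=
          Summable.tsum_le_tsum (fun k => mul_le_mul_of_nonneg_left (hCb k) (abs_nonneg _))
            hc2 ((hA i).mul_right Cb)
      _ = (∑' k : ℕ, |a ((k:ℤ)-(i:ℤ))|) * Cb := tsum_mul_right
      _ ≤ Sa * Cb := by
          refine mul_le_mul_of_nonneg_right ?_ hCb0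
          exact aux_inj_tsum_le ha _ (fun x y h => by simpa using h)
  have hαle : ∀ i : ℕ, (∑' k : ℕ, |a (-((k:ℤ)+1) - (i:ℤ))|) ≤ Sa :=
    fun i => aux_inj_tsum_le ha _ (fun x y h => by simp at h; omega)
  -- decay of the majorant
  have hα : Tendsto (fun i : ℕ => ∑' k : ℕ, |a (-((k:ℤ)+1) - (i:ℤ))|) atTop (𝓝 0) := by
    have hcongr : (fun i : ℕ => ∑' k : ℕ, |a (-((k:ℤ)+1) - (i:ℤ))|)
        = fun i : ℕ => ∑' k : ℕ, (fun n : ℕ => |a (-(n:ℤ) - 1)|) (k + i) := by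
      funext i
      refine tsum_congr fun k => ?_
      have : -((k:ℤ)+1) - (i:ℤ) = -(((k + i : ℕ)):ℤ) - 1 := by push_cast; ring
      rw [this]
    rw [hcongr]
    exact _root_.tendsto_sum_nat_add (fun n : ℕ => |a (-(n:ℤ) - 1)|)
  have hβ : Tendsto (fun i : ℕ => ∑' k : ℕ, |a ((k:ℤ) - (i:ℤ))| * wEb k) atTop (𝓝 0) :=
    aux_beta a ha wEb hwEb0 Cb hCb hEbd.2
  have hwEat : Tendsto wEa atTop (𝓝 0) := hEad.2
  have hρ : Tendsto (fun i : ℕ => (∑' k : ℕ, |a ((k:ℤ)-(i:ℤ))| * wEb k) + wEa i * Bb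
      + wEa i * Cb + (∑' k : ℕ, |a (-((k:ℤ)+1) - (i:ℤ))|) * Bb) atTop (𝓝 0) := by
    have := ((hβ.add (hwEat.mul_const Bb)).add (hwEat.mul_const Cb)).add (hα.mul_const Bb)
    simpa using this
  refine ⟨Ec, ⟨fun i => hEcrow i, ⟨Sa * Cb + Ca * Bb + Ca * Cb + Sa * Bb, ?_⟩⟩,
    ⟨fun i => hEcrow i, ?_⟩, fun i j => by simp only [hEcdef]; ring⟩
  · rintro x ⟨i, rfl⟩
    refine (hEcsum i).trans ?_
    refine add_le_add (add_le_add (add_le_add (hβle i) ?_) ?_) ?_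
    · exact mul_le_mul_of_nonneg_right (hCa i) hBb0
    · exact mul_le_mul_of_nonneg_right (hCa i) hCb0
    · exact mul_le_mul_of_nonneg_right (hαle i) hBb0
  · exact squeeze_zero (fun i => tsum_nonneg fun j => abs_nonneg _) hEcsum hρ
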